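/- Let φ be the morphism φ(A) = A^p B, φ(B) = A^q B with p > q ≥ 1, and u_β its fixed point. Define w^(0) = B, w^(n) = B·φ(w^(n-1)), and w = lim w^(n). Define v = u_β. Suppose: (i) every prefix of v of length n is a factor of u_β minimizing the B-count among factors of length n, (ii) every prefix of w of length n is a factor of u_β maximizing the B-count among factors of length n. Then for all n ∈ ℕ, the Abelian complexity of u_β satisfies AC(n) = 1 + U_k − Σ_{j=1}^{k} (d_j + e_j) U_{j-1}, where k is any index with n ≤ |w^(k)|, (d_k,…,d_0) is the normal U-representation of n, and (e_k,…,e_0) is the normal U-representation of U_{k+1} − n, with U_m = |φ^m(A)|. -/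

import Mathlib

/-- Number of occurrences of the letter `A` (encoded as `false`). -/
def countA (w : List Bool) : ℕ := w.count false

/-- Number of occurrences of the letter `B` (encoded as `true`). -/
def countB (w : List Bool) : ℕ := w.count true

/-- Extension of a morphism (given on letters) to finite words. -/
def applyM (φ : Bool → List Bool) (w : List Bool) : List Bool := (w.map φ).flatten

/-- `w` is a factor of the infinite word `u`. -/
def IsFactor (u : ℕ → Bool) (w : List Bool) : Prop :=
  ∃ i, w = (List.range w.length).map (fun j => u (i + j))

/-- The prefix of length `n` of the infinite word `u`. -/
def prefWord (u : ℕ → Bool) (n : ℕ) : List Bool := (List.range n).map u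

/-- The finite word `w` is a prefix of the infinite word `u`. -/
def IsPrefixOf (w : List Bool) (u : ℕ → Bool) : Prop := w = prefWord u w.length

/-- Abelian complexity: number of Parikh vectors of factors of length `n`. -/
noncomputable def AC (u : ℕ → Bool) (n : ℕ) : ℕ :=
  Set.ncard {P : ℕ × ℕ | ∃ w, IsFactor u w ∧ w.length = n ∧ P = (countA w, countB w)}

/-- `n`-fold iterate of the morphism `φ` applied to the letter `a`. -/
def iterW (φ : Bool → List Bool) (n : ℕ) (a : Bool) : List Bool := (applyM φ)^[n] [a]

/-- The morphism `A ↦ AᵖB, B ↦ A^q` (simple Parry case). -/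
def simpleM (p q : ℕ) : Bool → List Bool
  | false => List.replicate p false ++ [true]
  | true  => List.replicate q false

/-- The morphism `A ↦ AᵖB, B ↦ A^qB` (non-simple Parry case). -/
def nonsimpleM (p q : ℕ) : Bool → List Bool
  | false => List.replicate p false ++ [true]
  | true  => List.replicate q false ++ [true]

/-- Greedy digits `(d_N, …, d_0)` of `x` in the base given by `U`
    (assuming `U 0 = 1`): `d_j = ⌊x_j / U_j⌋`, `x_{j-1} = x_j mod U_j`. -/
def gdigits (U : ℕ → ℕ) : ℕ → ℕ → List ℕ
  | 0, x => [x]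
  | j+1, x => x / U (j+1) :: gdigits U j (x % U (j+1))

/-- The digit `d_j` of the normal `U`-representation `(d_N, …, d_0)` of `n`. -/
def dig (U : ℕ → ℕ) (N n j : ℕ) : ℕ := (gdigits U N n).getD (N - j) 0

/-- The words `w⁽ⁿ⁾` of the non-simple Parry case: `w⁽⁰⁾ = B`, `w⁽ⁿ⁾ = B·φ(w⁽ⁿ⁻¹⁾)`. -/
def wNon (φ : Bool → List Bool) : ℕ → List Bool
  | 0 => [true]
  | n+1 => true :: applyM φ (wNon φ n)

/-- The words `w⁽ᴺ⁾ = B·φ(A^{q-1})·φ³(A^{q-1})⋯φ^{2N-1}(A^{q-1})` of the simple Parry case. -/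
def wSim (φ : Bool → List Bool) (q : ℕ) (N : ℕ) : List Bool :=
  true :: ((List.range N).map
    (fun k => (applyM φ)^[2*k+1] (List.replicate (q-1) false))).flatten

/-!
Since `φ^{k+1}(A) = (φ^k A)^p φ^k B` and `φ^{k+1}(B) = (φ^k A)^q φ^k B`, induction on `k` shows
that the `B`-count of the prefix of length `r < U_{k+1}` of `φ^{k+1}(A)` (and of `φ^{k+1}(B)`) is
the shifted digit sum `∑_{j=1}^k d_j U_{j-1}` of the greedy `U`-representation `(d_k, …, d_0)` of `r`.
Because the reversal of `φ(x)·B` is `B·φ(reversal of x)`, the reversal of `w⁽ᵏ⁾` is a suffix of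
`φ^{k+1}(A)`; so the length-`n` prefix of `w` has `B`-count `U_k` minus the shifted digit sum of
`U_{k+1} - n`. Finally, sliding a window along `u_β` changes its `B`-count by at most one, so the
`B`-counts of the factors of length `n` form the whole interval between the extremal ones given by
`v` and `w`, and `AC(n)` is one more than its length.
-/

lemma prefWord_eq_take {w : List Bool} {u : ℕ → Bool} (h : IsPrefixOf w u) {n : ℕ}
    (hn : n ≤ w.length) : prefWord u n = w.take n := by
  conv_rhs => rw [h]
  simp [prefWord, ← List.map_take, List.take_range, min_eq_left hn]

lemma exists_apply_eq_of_succ_le_add_one (f : ℕ → ℕ) (hf : ∀ i, f (i + 1) ≤ f i + 1)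
    {c : ℕ} (h0 : f 0 ≤ c) {m : ℕ} (hm : c ≤ f m) : ∃ i, f i = c := by
  induction m with
  | zero => exact ⟨0, le_antisymm h0 hm⟩
  | succ m ih =>
    by_cases hc : c ≤ f m
    · exact ih hc
    · exact ⟨m + 1, by have := hf m; omega⟩

def window (u : ℕ → Bool) (i n : ℕ) : List Bool := (List.range n).map fun j => u (i + j)

lemma length_window (u : ℕ → Bool) (i n : ℕ) : (window u i n).length = n := by simp [window]

lemma window_zero (u : ℕ → Bool) (n : ℕ) : window u 0 n = prefWord u n := by
  simp [window, prefWord]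

lemma isFactor_window (u : ℕ → Bool) (i n : ℕ) : IsFactor u (window u i n) :=
  ⟨i, by rw [length_window]; rfl⟩

lemma countB_window_succ_le (u : ℕ → Bool) (i n : ℕ) :
    countB (window u (i + 1) n) ≤ countB (window u i n) + 1 := by
  have hcons : window u i (n + 1) = u i :: window u (i + 1) n := by
    simp only [window, List.range_succ_eq_map, List.map_cons, List.map_map]
    congr 2 with j
    simp [Nat.add_assoc, Nat.add_comm 1]
  have hsnoc : window u i (n + 1) = window u i n ++ [u (i + n)] := by
    simp [window, List.range_succ]
  have h := congrArg countB hsnoc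
  rw [hcons] at h
  simp only [countB, List.count_cons, List.count_append, List.count_nil] at h ⊢
  split_ifs at h <;> omega

lemma AC_eq_of_prefWord_min (u : ℕ → Bool) (n : ℕ) {y : List Bool} (hy : IsFactor u y)
    (hyn : y.length = n)
    (hmin : ∀ x, IsFactor u x → x.length = n → countB (prefWord u n) ≤ countB x)
    (hmax : ∀ x, IsFactor u x → x.length = n → countB x ≤ countB y) :
    AC u n = countB y + 1 - countB (prefWord u n) := by
  have hset : {P : ℕ × ℕ | ∃ x, IsFactor u x ∧ x.length = n ∧ P = (countA x, countB x)} =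
      (fun c => (n - c, c)) '' Set.Icc (countB (prefWord u n)) (countB y) := by
    ext P
    constructor
    · rintro ⟨x, hx, hxn, rfl⟩
      refine ⟨countB x, ⟨hmin x hx hxn, hmax x hx hxn⟩, ?_⟩
      have := List.count_false_add_count_true x
      simp only [countA, countB, Prod.mk.injEq, and_true]
      omega
    · rintro ⟨c, ⟨hbc, hcW⟩, rfl⟩
      obtain ⟨m, hym⟩ := hy
      rw [hyn] at hym
      obtain ⟨i, hi⟩ := exists_apply_eq_of_succ_le_add_one (fun i => countB (window u i n))
        (countB_window_succ_le u · n) (c := c) (m := m) (by simpa [window_zero] using hbc)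
        (by rwa [hym] at hcW)
      refine ⟨window u i n, isFactor_window u i n, length_window u i n, ?_⟩
      have := List.count_false_add_count_true (window u i n)
      simp only [countA, countB, length_window] at hi this ⊢
      rw [← hi]
      congr 1
      omega
  rw [AC, hset, Set.ncard_image_of_injective _ fun a b h => congrArg Prod.snd h,
    ← Finset.coe_Icc, Set.ncard_coe_finset, Nat.card_Icc]

section Morphism

variable (φ : Bool → List Bool)

lemma applyM_append (x y : List Bool) : applyM φ (x ++ y) = applyM φ x ++ applyM φ y := by
  simp [applyM]

lemma iterate_applyM_append (m : ℕ) (x y : List Bool) :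
    (applyM φ)^[m] (x ++ y) = (applyM φ)^[m] x ++ (applyM φ)^[m] y := by
  induction m generalizing x y with
  | zero => rfl
  | succ m ih => simp only [Function.iterate_succ_apply, applyM_append, ih]

lemma iterate_applyM_eq_applyM_iterW (m : ℕ) (w : List Bool) :
    (applyM φ)^[m] w = applyM (iterW φ m) w := by
  induction w with
  | nil => simpa [applyM] using (iterate_applyM_append φ m [] []).symm
  | cons a w ih =>
    rw [← List.singleton_append, iterate_applyM_append, ih, applyM_append]
    simp [applyM, iterW]

lemma iterW_succ (m : ℕ) (a : Bool) :
    iterW φ (m + 1) a = applyM (iterW φ m) (φ a) := by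
  rw [iterW, Function.iterate_succ_apply, ← iterate_applyM_eq_applyM_iterW]
  simp [applyM]

lemma iterW_one (a : Bool) : iterW φ 1 a = φ a := by
  simp [iterW, applyM]

end Morphism

def shiftedDigitSum (U : ℕ → ℕ) (k n : ℕ) : ℕ :=
  ∑ j ∈ Finset.Icc 1 k, dig U k n j * U (j - 1)

section ShiftedDigitSum

variable (U : ℕ → ℕ) (k : ℕ)

@[simp]
lemma shiftedDigitSum_zero (n : ℕ) : shiftedDigitSum U 0 n = 0 := rfl

lemma shiftedDigitSum_succ (n : ℕ) :
    shiftedDigitSum U (k + 1) n = n / U (k + 1) * U k + shiftedDigitSum U k (n % U (k + 1)) := by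
  rw [shiftedDigitSum, Finset.sum_Icc_succ_top (by omega), add_comm, shiftedDigitSum]
  congr 1
  · simp [dig, gdigits]
  · refine Finset.sum_congr rfl fun j hj => ?_
    obtain ⟨i, rfl⟩ : ∃ i, k = j + i := Nat.exists_eq_add_of_le (Finset.mem_Icc.mp hj).2
    simp [dig, gdigits, show j + i + 1 - j = i + 1 by omega]

lemma shiftedDigitSum_succ_of_lt {n : ℕ} (hn : n < U (k + 1)) :
    shiftedDigitSum U (k + 1) n = shiftedDigitSum U k n := by
  simp [shiftedDigitSum_succ, Nat.div_eq_of_lt hn, Nat.mod_eq_of_lt hn]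

lemma shiftedDigitSum_succ_add (hU : 0 < U (k + 1)) (n : ℕ) :
    shiftedDigitSum U (k + 1) (U (k + 1) + n) = U k + shiftedDigitSum U (k + 1) n := by
  simp only [shiftedDigitSum_succ, Nat.add_mod_left, Nat.add_div_left _ hU]
  ring

lemma countB_take_flatten_replicate_append {X y : List Bool} (hUpos : 0 < U (k + 1))
    (hX : X.length = U (k + 1)) (hXB : countB X = U k) (hy : y.length ≤ U (k + 1))
    (hXtake : ∀ r < U (k + 1), countB (X.take r) = shiftedDigitSum U k r)
    (hytake : ∀ r < y.length, countB (y.take r) = shiftedDigitSum U k r) (c : ℕ) :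
    ∀ r < c * U (k + 1) + y.length,
      countB (((List.replicate c X).flatten ++ y).take r) = shiftedDigitSum U (k + 1) r := by
  induction c with
  | zero =>
    intro r hr
    simp only [zero_mul, zero_add] at hr
    simp [hytake r hr, shiftedDigitSum_succ_of_lt U k (hr.trans_le hy)]
  | succ c ih =>
    intro r hr
    rw [List.replicate_succ, List.flatten_cons, List.append_assoc]
    rcases lt_or_ge r (U (k + 1)) with hrX | hrX
    · rw [List.take_append_of_le_length (hX ▸ hrX.le), hXtake r hrX,
        shiftedDigitSum_succ_of_lt U k hrX]
    · obtain ⟨r, rfl⟩ := Nat.exists_eq_add_of_le hrX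
      rw [← hX, List.take_length_add_append, countB, List.count_append, ← countB, ← countB,
        hXB, hX, ih r (by rw [add_mul] at hr; omega), shiftedDigitSum_succ_add U k hUpos]

end ShiftedDigitSum

section NonSimpleParry

variable {p q : ℕ}

lemma nonsimpleM_false_of_pos (hp : 1 ≤ p) :
    nonsimpleM p q false = List.replicate (p - 1) false ++ [false, true] := by
  conv_lhs => rw [nonsimpleM, ← Nat.sub_add_cancel hp, List.replicate_succ']
  simp

lemma iterW_nonsimpleM_succ_false (m : ℕ) :
    iterW (nonsimpleM p q) (m + 1) false =
      (List.replicate p (iterW (nonsimpleM p q) m false)).flatten ++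
        iterW (nonsimpleM p q) m true := by
  rw [iterW_succ]; simp [nonsimpleM, applyM, List.map_replicate]

lemma iterW_nonsimpleM_succ_true (m : ℕ) :
    iterW (nonsimpleM p q) (m + 1) true =
      (List.replicate q (iterW (nonsimpleM p q) m false)).flatten ++
        iterW (nonsimpleM p q) m true := by
  rw [iterW_succ]; simp [nonsimpleM, applyM, List.map_replicate]

lemma length_iterW_nonsimpleM_pos (m : ℕ) (a : Bool) :
    0 < (iterW (nonsimpleM p q) m a).length := by
  cases m with
  | zero => exact Nat.one_pos
  | succ m =>
    cases a
    · rw [iterW_nonsimpleM_succ_false, List.length_append]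
      exact Nat.add_pos_right _ (length_iterW_nonsimpleM_pos m true)
    · rw [iterW_nonsimpleM_succ_true, List.length_append]
      exact Nat.add_pos_right _ (length_iterW_nonsimpleM_pos m true)

lemma length_iterW_nonsimpleM_true_le (hqp : q ≤ p) (m : ℕ) :
    (iterW (nonsimpleM p q) m true).length ≤ (iterW (nonsimpleM p q) m false).length := by
  induction m with
  | zero => rfl
  | succ m ih =>
    rw [iterW_nonsimpleM_succ_false, iterW_nonsimpleM_succ_true]
    simp only [List.length_append, List.length_flatten, List.map_replicate, List.sum_replicate,
      smul_eq_mul]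
    gcongr

lemma countB_applyM_nonsimpleM (w : List Bool) : countB (applyM (nonsimpleM p q) w) = w.length := by
  induction w with
  | nil => rfl
  | cons a w ih =>
    rw [← List.singleton_append, applyM_append, countB, List.count_append]
    change countB _ + countB _ = _
    rw [ih]
    cases a <;> simp [applyM, nonsimpleM, countB, List.count_replicate, add_comm]

lemma countB_iterW_nonsimpleM_succ_false (m : ℕ) :
    countB (iterW (nonsimpleM p q) (m + 1) false) = (iterW (nonsimpleM p q) m false).length := by
  rw [iterW, Function.iterate_succ_apply']
  exact countB_applyM_nonsimpleM _

lemma countB_take_replicate_append_true (c r : ℕ) (hr : r < c + 1) :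
    countB ((List.replicate c false ++ [true]).take r) = 0 := by
  rw [List.take_append_of_le_length (by simpa using Nat.le_of_lt_succ hr), List.take_replicate]
  simp [countB, List.count_replicate]

lemma countB_take_iterW_nonsimpleM (hqp : q ≤ p) (U : ℕ → ℕ)
    (hU : ∀ m, U m = (iterW (nonsimpleM p q) m false).length) (k : ℕ) :
    (∀ r < U (k + 1),
      countB ((iterW (nonsimpleM p q) (k + 1) false).take r) = shiftedDigitSum U k r) ∧
    (∀ r < (iterW (nonsimpleM p q) (k + 1) true).length,
      countB ((iterW (nonsimpleM p q) (k + 1) true).take r) = shiftedDigitSum U k r) := by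
  induction k with
  | zero =>
    refine ⟨fun r hr => ?_, fun r hr => ?_⟩ <;>
      simp only [zero_add, hU, iterW_one, nonsimpleM, List.length_append, List.length_replicate,
        List.length_singleton, shiftedDigitSum_zero] at hr ⊢ <;>
      exact countB_take_replicate_append_true _ r hr
  | succ k ih =>
    have hA := (hU (k + 1)).symm
    have hy : (iterW (nonsimpleM p q) (k + 1) true).length ≤ U (k + 1) :=
      hU (k + 1) ▸ length_iterW_nonsimpleM_true_le hqp (k + 1)
    have hUpos : 0 < U (k + 1) := hU (k + 1) ▸ length_iterW_nonsimpleM_pos _ _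
    have hB : countB (iterW (nonsimpleM p q) (k + 1) false) = U k := by
      rw [countB_iterW_nonsimpleM_succ_false, hU]
    have hblocks := countB_take_flatten_replicate_append U k hUpos hA hB hy ih.1 ih.2
    refine ⟨fun r hr => ?_, fun r hr => ?_⟩
    · rw [hU, iterW_nonsimpleM_succ_false (k + 1)] at hr
      rw [iterW_nonsimpleM_succ_false (k + 1)]
      refine hblocks p r ?_
      simpa [List.sum_replicate, hA] using hr
    · rw [iterW_nonsimpleM_succ_true (k + 1)] at hr ⊢
      refine hblocks q r ?_
      simpa [List.sum_replicate, hA] using hr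

lemma reverse_applyM_nonsimpleM_append_true (w : List Bool) :
    (applyM (nonsimpleM p q) w).reverse ++ [true] = true :: applyM (nonsimpleM p q) w.reverse := by
  induction w with
  | nil => rfl
  | cons a w ih =>
    have hletter : (nonsimpleM p q a).reverse ++ [true] = true :: nonsimpleM p q a := by
      cases a <;> simp [nonsimpleM]
    rw [← List.singleton_append, applyM_append, List.reverse_append, List.append_assoc,
      List.reverse_append, applyM_append]
    simp only [applyM, List.map_cons, List.map_nil, List.flatten_cons, List.flatten_nil,
      List.append_nil, List.reverse_singleton] at hletter ih ⊢
    rw [hletter, ← List.singleton_append, ← List.append_assoc, ih, List.cons_append]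

lemma exists_iterW_nonsimpleM_eq_append_reverse_wNon (hp : 1 ≤ p) (k : ℕ) :
    ∃ t, iterW (nonsimpleM p q) (k + 1) false =
      t ++ false :: (wNon (nonsimpleM p q) k).reverse := by
  induction k with
  | zero =>
    refine ⟨List.replicate (p - 1) false, ?_⟩
    simp [iterW_one, nonsimpleM_false_of_pos hp, wNon]
  | succ k ih =>
    obtain ⟨t, ht⟩ := ih
    refine ⟨applyM (nonsimpleM p q) t ++ List.replicate (p - 1) false, ?_⟩
    have hrev : (wNon (nonsimpleM p q) (k + 1)).reverse =
        true :: applyM (nonsimpleM p q) (wNon (nonsimpleM p q) k).reverse := by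
      rw [wNon, List.reverse_cons, reverse_applyM_nonsimpleM_append_true]
    rw [iterW, Function.iterate_succ_apply', ← iterW, ht, hrev, ← List.singleton_append,
      applyM_append, applyM_append]
    simp [applyM, nonsimpleM_false_of_pos hp]

lemma length_wNon_nonsimpleM_lt (hp : 1 ≤ p) (k : ℕ) :
    (wNon (nonsimpleM p q) k).length < (iterW (nonsimpleM p q) (k + 1) false).length := by
  obtain ⟨t, ht⟩ := exists_iterW_nonsimpleM_eq_append_reverse_wNon (q := q) hp k
  simp [ht]
  omega

lemma countB_take_wNon_add_shiftedDigitSum (hqp : q < p) (U : ℕ → ℕ)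
    (hU : ∀ m, U m = (iterW (nonsimpleM p q) m false).length) {k n : ℕ} (hn : 0 < n)
    (hnk : n ≤ (wNon (nonsimpleM p q) k).length) :
    countB ((wNon (nonsimpleM p q) k).take n) + shiftedDigitSum U k (U (k + 1) - n) = U k := by
  obtain ⟨t, ht⟩ :=
    exists_iterW_nonsimpleM_eq_append_reverse_wNon (p := p) (q := q) (by omega) k
  set w := wNon (nonsimpleM p q) k
  have hlen : U (k + 1) = t.length + 1 + w.length := by simp [hU, ht]; omega
  have hsuffix :
      (iterW (nonsimpleM p q) (k + 1) false).drop (U (k + 1) - n) = (w.take n).reverse := by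
    rw [List.reverse_take, ht, hlen, ← List.singleton_append, ← List.append_assoc,
      show t.length + 1 + w.length - n = (t ++ [false]).length + (w.length - n) by simp; omega,
      List.drop_length_add_append]
  have hprefix := (countB_take_iterW_nonsimpleM hqp.le U hU k).1 (U (k + 1) - n) (by omega)
  calc countB (w.take n) + shiftedDigitSum U k (U (k + 1) - n)
      = countB ((iterW (nonsimpleM p q) (k + 1) false).drop (U (k + 1) - n)) +
          countB ((iterW (nonsimpleM p q) (k + 1) false).take (U (k + 1) - n)) := by
        rw [hsuffix, hprefix, countB, countB, List.count_reverse]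
    _ = U k := by
        rw [add_comm, countB, countB, ← List.count_append, List.take_append_drop, ← countB,
          countB_iterW_nonsimpleM_succ_false, hU]

end NonSimpleParry

theorem stmt16_general (p q : ℕ) (hpq : q < p)
    (φ : Bool → List Bool) (hφ : φ = nonsimpleM p q)
    (ub : ℕ → Bool) (hub : ∀ m, IsPrefixOf (iterW φ m false) ub)
    (U : ℕ → ℕ) (hU : ∀ m, U m = (iterW φ m false).length)
    (winf : ℕ → Bool) (hwinf : ∀ m, IsPrefixOf (wNon φ m) winf)
    (hvmin : ∀ (n : ℕ) (x : List Bool), IsFactor ub x → x.length = n →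
      countB (prefWord ub n) ≤ countB x)
    (hwfac : ∀ n : ℕ, IsFactor ub (prefWord winf n))
    (hwmax : ∀ (n : ℕ) (x : List Bool), IsFactor ub x → x.length = n →
      countB x ≤ countB (prefWord winf n))
    (n k : ℕ) (hn : 0 < n) (hk : n ≤ (wNon φ k).length) :
    AC ub n = 1 + U k - ∑ j ∈ Finset.Icc 1 k,
      (dig U k n j + dig U k (U (k+1) - n) j) * U (j-1) := by
  subst hφ
  have hnU : n < U (k + 1) := hU (k + 1) ▸ hk.trans_lt (length_wNon_nonsimpleM_lt (by omega) k)
  have hv : countB (prefWord ub n) = shiftedDigitSum U k n := by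
    rw [prefWord_eq_take (hub (k + 1)) (hU (k + 1) ▸ hnU.le)]
    exact (countB_take_iterW_nonsimpleM hpq.le U hU k).1 n hnU
  have hw : countB (prefWord winf n) + shiftedDigitSum U k (U (k + 1) - n) = U k := by
    rw [prefWord_eq_take (hwinf k) hk]
    exact countB_take_wNon_add_shiftedDigitSum hpq U hU hn hk
  have hsum : ∑ j ∈ Finset.Icc 1 k, (dig U k n j + dig U k (U (k + 1) - n) j) * U (j - 1) =
      shiftedDigitSum U k n + shiftedDigitSum U k (U (k + 1) - n) := by
    simp only [shiftedDigitSum, ← Finset.sum_add_distrib, add_mul]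
  rw [AC_eq_of_prefWord_min ub n (hwfac n) (by simp [prefWord]) (hvmin n) (hwmax n), hsum]
  omega

/-- formula for the Abelian complexity in the non-simple Parry case,
assuming the extremal properties of `v = u_β` and `w = lim w⁽ⁿ⁾`. -/
theorem stmt16 (p q : ℕ) (hq : 1 ≤ q) (hpq : q < p)
    (φ : Bool → List Bool) (hφ : φ = nonsimpleM p q)
    (ub : ℕ → Bool) (hub : ∀ m, IsPrefixOf (iterW φ m false) ub)
    (U : ℕ → ℕ) (hU : ∀ m, U m = (iterW φ m false).length)
    (winf : ℕ → Bool) (hwinf : ∀ m, IsPrefixOf (wNon φ m) winf)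
    (hvfac : ∀ n : ℕ, IsFactor ub (prefWord ub n))
    (hvmin : ∀ (n : ℕ) (x : List Bool), IsFactor ub x → x.length = n →
      countB (prefWord ub n) ≤ countB x)
    (hwfac : ∀ n : ℕ, IsFactor ub (prefWord winf n))
    (hwmax : ∀ (n : ℕ) (x : List Bool), IsFactor ub x → x.length = n →
      countB x ≤ countB (prefWord winf n))
    (n k : ℕ) (hn : 0 < n) (hk : n ≤ (wNon φ k).length) :
    AC ub n = 1 + U k - ∑ j ∈ Finset.Icc 1 k,
      (dig U k n j + dig U k (U (k+1) - n) j) * U (j-1) :=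
  stmt16_general p q hpq φ hφ ub hub U hU winf hwinf hvmin hwfac hwmax n k hn hk
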